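/- For every z > 0, the function g_z is monotonically increasing on (−∞, 0) and monotonically decreasing on (z, ∞). -/

import Mathlib

/-!
Write `R(w) = √(2π) e^{w²/2} (1 - Φ(w))` for the Mills ratio and `k(w) = (1 + w²) R(w) - w`.
Then `g_z(w) = Φ(z) k(w)` for `w > z`, and, by the symmetry `Φ(-w) = 1 - Φ(w)`,
`g_z(w) = (1 - Φ(z)) k(-w)` for `w ≤ z`; so both claims say that `k` decreases on `(0, ∞)`.
Since `R' = w R - 1`, we get `k'(w) = w (w² + 3) R(w) - (w² + 2)`, which is negative by the
Mills-ratio bound `R(w) < (w² + 2) / (w³ + 3w)`. That bound holds because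
`(w² + 2) / (w³ + 3w) · φ(w) - (1 - Φ(w))` has derivative `-6 φ(w) / (w³ + 3w)²` and tends to `0`.
-/

noncomputable section

/-- The standard normal cumulative distribution function
`Φ(w) = ∫_{-∞}^w (1/√(2π)) e^{-t²/2} dt`. -/
def Phi (w : ℝ) : ℝ :=
  ∫ t in Set.Iic w, (1 / Real.sqrt (2 * Real.pi)) * Real.exp (-t ^ 2 / 2)

/-- The function `g_z = (w f_z(w))'` where `f_z` is the bounded solution of the Stein
equation for the indicator of `(-∞, z]`. -/
def gz (z w : ℝ) : ℝ :=
  if z < w then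
    (Real.sqrt (2 * Real.pi) * (1 + w ^ 2) * Real.exp (w ^ 2 / 2) * (1 - Phi w) - w) * Phi z
  else
    (Real.sqrt (2 * Real.pi) * (1 + w ^ 2) * Real.exp (w ^ 2 / 2) * Phi w + w) * (1 - Phi z)

open Real MeasureTheory Set Filter Topology ProbabilityTheory

local notation "φ" => gaussianPDFReal 0 1

lemma gaussianPDFReal_zero_one (x : ℝ) : φ x = (√(2 * π))⁻¹ * exp (-x ^ 2 / 2) := by
  simp [gaussianPDFReal]

lemma hasDerivAt_gaussianPDFReal_zero_one (x : ℝ) : HasDerivAt φ (-x * φ x) x := by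
  have h := (((hasDerivAt_pow 2 x).fun_neg.div_const 2).exp).const_mul (√(2 * π))⁻¹
  rw [funext gaussianPDFReal_zero_one]
  refine h.congr_deriv ?_
  push_cast
  ring

lemma sqrt_two_pi_mul_exp_mul_gaussianPDFReal (x : ℝ) :
    √(2 * π) * exp (x ^ 2 / 2) * φ x = 1 := by
  have hexp : exp (x ^ 2 / 2) * exp (-x ^ 2 / 2) = 1 := by rw [← exp_add]; simp [neg_div]
  rw [gaussianPDFReal_zero_one, ← hexp]
  field_simp

lemma Phi_eq_integral (x : ℝ) : Phi x = ∫ t in Iic x, φ t := by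
  simp only [Phi, gaussianPDFReal_zero_one, one_div]

lemma Phi_eq_cdf : Phi = cdf (gaussianReal 0 1) := by
  ext x
  rw [cdf_eq_real, measureReal_def, gaussianReal_apply_eq_integral _ one_ne_zero,
    ENNReal.toReal_ofReal (setIntegral_nonneg measurableSet_Iic
      fun t _ ↦ gaussianPDFReal_nonneg 0 1 t), Phi_eq_integral]

lemma Phi_sub_Phi_eq_integral (a b : ℝ) : Phi b - Phi a = ∫ t in a..b, φ t := by
  simp only [Phi_eq_integral]
  exact intervalIntegral.integral_Iic_sub_Iic (integrable_gaussianPDFReal 0 1).integrableOn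
    (integrable_gaussianPDFReal 0 1).integrableOn

lemma hasDerivAt_Phi (x : ℝ) : HasDerivAt Phi (φ x) x := by
  have hcont : Continuous φ := by
    simp only [funext gaussianPDFReal_zero_one]; fun_prop
  have h := (hcont.integral_hasStrictDerivAt 0 x).hasDerivAt.const_add (Phi 0)
  simpa only [← Phi_sub_Phi_eq_integral, add_sub_cancel] using h

lemma Phi_neg (x : ℝ) : Phi (-x) = 1 - Phi x := by
  have heven : (fun t ↦ φ (-t)) = φ := by
    ext t; simp only [gaussianPDFReal_zero_one, neg_sq]
  have hsplit := intervalIntegral.integral_Iic_add_Ioi (b := x)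
    (integrable_gaussianPDFReal 0 1).integrableOn (integrable_gaussianPDFReal 0 1).integrableOn
  rw [integral_gaussianPDFReal_eq_one 0 one_ne_zero] at hsplit
  rw [Phi_eq_integral, Phi_eq_integral, ← integral_comp_neg_Ioi, heven]
  linarith

lemma StrictAntiOn.lt_apply_of_tendsto_atTop {α β : Type*} [LinearOrder α] [NoMaxOrder α]
    [LinearOrder β] [TopologicalSpace β] [OrderClosedTopology β] {f : α → β} {a x : α} {l : β}
    (hf : StrictAntiOn f (Ioi a)) (hl : Tendsto f atTop (𝓝 l)) (hx : a < x) : l < f x := by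
  have : Nonempty α := ⟨x⟩
  obtain ⟨y, hxy⟩ := exists_gt x
  have hy : a < y := hx.trans hxy
  refine (le_of_tendsto hl ?_).trans_lt (hf hx hy hxy)
  filter_upwards [eventually_gt_atTop y] with t ht
  exact (hf hy (hy.trans ht) ht).le

/-- The Mills ratio `(1 - Φ(x)) / φ(x)`. -/
def millsRatio (x : ℝ) : ℝ := √(2 * π) * exp (x ^ 2 / 2) * (1 - Phi x)

lemma millsRatio_neg (x : ℝ) : millsRatio (-x) = √(2 * π) * exp (x ^ 2 / 2) * Phi x := by
  rw [millsRatio, neg_sq, Phi_neg, sub_sub_cancel]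

lemma hasDerivAt_millsRatio (x : ℝ) : HasDerivAt millsRatio (x * millsRatio x - 1) x := by
  have h := (((hasDerivAt_pow 2 x).div_const 2).exp.const_mul (√(2 * π))).fun_mul
    ((hasDerivAt_Phi x).const_sub 1)
  refine h.congr_deriv ?_
  rw [millsRatio]
  push_cast
  linear_combination -sqrt_two_pi_mul_exp_mul_gaussianPDFReal x

/-- `φ x` times the gap in the Mills-ratio bound `millsRatio x < (x² + 2) / (x³ + 3x)`. -/
def millsUpperGap (x : ℝ) : ℝ := (x ^ 2 + 2) / (x ^ 3 + 3 * x) * φ x - (1 - Phi x)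

lemma hasDerivAt_millsUpperGap {x : ℝ} (hx : 0 < x) :
    HasDerivAt millsUpperGap (-6 * φ x / (x ^ 3 + 3 * x) ^ 2) x := by
  have hne : x ^ 3 + 3 * x ≠ 0 := by positivity
  have hnum : HasDerivAt (fun y ↦ y ^ 2 + 2) (2 * x) x := by
    simpa using (hasDerivAt_pow 2 x).add_const 2
  have hden : HasDerivAt (fun y ↦ y ^ 3 + 3 * y) (3 * x ^ 2 + 3) x := by
    simpa using (hasDerivAt_pow 3 x).fun_add ((hasDerivAt_id x).const_mul 3)
  have h := ((hnum.fun_div hden hne).fun_mul (hasDerivAt_gaussianPDFReal_zero_one x)).fun_sub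
    ((hasDerivAt_Phi x).const_sub 1)
  refine h.congr_deriv ?_
  field_simp
  ring

lemma tendsto_millsUpperGap_atTop : Tendsto millsUpperGap atTop (𝓝 0) := by
  unfold millsUpperGap
  have hrat : Tendsto (fun x : ℝ ↦ (x ^ 2 + 2) / (x ^ 3 + 3 * x)) atTop (𝓝 0) := by
    refine squeeze_zero' ?_ ?_ tendsto_inv_atTop_zero
    · filter_upwards [eventually_gt_atTop 0] with x hx
      positivity
    · filter_upwards [eventually_gt_atTop 0] with x hx
      rw [div_le_iff₀ (by positivity)]
      field_simp
      nlinarith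
  have hpdf : Tendsto φ atTop (𝓝 0) := by
    simp only [funext gaussianPDFReal_zero_one, neg_div]
    simpa using (tendsto_exp_atBot.comp (tendsto_neg_atTop_atBot.comp
      ((tendsto_pow_atTop two_ne_zero).atTop_div_const two_pos))).const_mul (√(2 * π))⁻¹
  have htail : Tendsto (fun x ↦ 1 - Phi x) atTop (𝓝 0) := by
    simpa [Phi_eq_cdf] using (tendsto_cdf_atTop (gaussianReal 0 1)).const_sub 1
  simpa using (hrat.mul hpdf).sub htail

lemma millsUpperGap_pos {x : ℝ} (hx : 0 < x) : 0 < millsUpperGap x := by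
  refine StrictAntiOn.lt_apply_of_tendsto_atTop ?_ tendsto_millsUpperGap_atTop hx
  refine strictAntiOn_of_deriv_neg (convex_Ioi 0)
    (fun y hy ↦ (hasDerivAt_millsUpperGap hy).continuousAt.continuousWithinAt) fun y hy ↦ ?_
  rw [interior_Ioi] at hy
  have hy0 : 0 < y := hy
  rw [(hasDerivAt_millsUpperGap hy0).deriv]
  exact div_neg_of_neg_of_pos (by linarith [gaussianPDFReal_pos 0 1 y one_ne_zero]) (by positivity)

lemma mul_millsRatio_lt {x : ℝ} (hx : 0 < x) : x * (x ^ 2 + 3) * millsRatio x < x ^ 2 + 2 := by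
  have hgap := millsUpperGap_pos hx
  have hpos : 0 < √(2 * π) * exp (x ^ 2 / 2) := by positivity
  rw [millsUpperGap, sub_pos, div_mul_eq_mul_div, lt_div_iff₀ (by positivity)] at hgap
  rw [millsRatio]
  nlinarith [mul_lt_mul_of_pos_left hgap hpos, sqrt_two_pi_mul_exp_mul_gaussianPDFReal x]

def gzUpper (w : ℝ) : ℝ := (1 + w ^ 2) * millsRatio w - w

lemma hasDerivAt_gzUpper (w : ℝ) :
    HasDerivAt gzUpper (w * (w ^ 2 + 3) * millsRatio w - (w ^ 2 + 2)) w := by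
  have h := (((hasDerivAt_pow 2 w).const_add 1).fun_mul (hasDerivAt_millsRatio w)).fun_sub
    (hasDerivAt_id' w)
  refine h.congr_deriv ?_
  norm_num
  ring

lemma strictAntiOn_gzUpper : StrictAntiOn gzUpper (Ioi 0) := by
  refine strictAntiOn_of_deriv_neg (convex_Ioi 0)
    (fun w _ ↦ (hasDerivAt_gzUpper w).continuousAt.continuousWithinAt) fun w hw ↦ ?_
  rw [interior_Ioi] at hw
  rw [(hasDerivAt_gzUpper w).deriv, sub_neg]
  exact mul_millsRatio_lt hw

lemma gz_of_lt {z w : ℝ} (h : z < w) : gz z w = gzUpper w * Phi z := by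
  rw [gz, if_pos h, gzUpper, millsRatio]
  ring

lemma gz_of_le {z w : ℝ} (h : w ≤ z) : gz z w = gzUpper (-w) * (1 - Phi z) := by
  rw [gz, if_neg h.not_gt, gzUpper, millsRatio_neg]
  ring

/-- For every `z > 0`, `g_z` is increasing on `(-∞, 0)` and decreasing on `(z, ∞)`. -/
theorem gz_monotone (z : ℝ) (hz : 0 < z) :
    MonotoneOn (gz z) (Set.Iio 0) ∧ AntitoneOn (gz z) (Set.Ioi z) := by
  have hPhi_nonneg : 0 ≤ Phi z := Phi_eq_cdf ▸ cdf_nonneg _ z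
  have hPhi_le_one : Phi z ≤ 1 := Phi_eq_cdf ▸ cdf_le_one _ z
  constructor
  · intro a (ha : a < 0) b (hb : b < 0) hab
    rw [gz_of_le (by linarith), gz_of_le (by linarith)]
    have := strictAntiOn_gzUpper.antitoneOn (neg_pos.2 hb) (neg_pos.2 ha) (neg_le_neg hab)
    exact mul_le_mul_of_nonneg_right this (sub_nonneg.2 hPhi_le_one)
  · intro a (ha : z < a) b (hb : z < b) hab
    rw [gz_of_lt ha, gz_of_lt hb]
    have := strictAntiOn_gzUpper.antitoneOn (hz.trans ha) (hz.trans hb) hab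
    exact mul_le_mul_of_nonneg_right this hPhi_nonneg
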